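/- Let E be a reproducing kernel Hilbert C*-module over a C*-algebra A on a set S with reproducing kernel K, let g : S → A be a function, and suppose the closed submodule E_0 := { h ∈ E : g·h = 0 } is orthogonally complemented in E. Then E_g := { g·h : h ∈ E } is a reproducing kernel Hilbert C*-module on S with the inner product ⟨g·h_1, g·h_2⟩ := ⟨h_1, h_2⟩ for h_1, h_2 ∈ E_0^⊥, its kernel element at s ∈ S is g·k_s·g(s)*, and its reproducing kernel is K'(s,t) = g(s) K(s,t) g(t)*. -/

import Mathlib

/-!
Because `P` is symmetric for the `A`-valued inner product, it is `ℂ`-linear, and being also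
idempotent it is a contraction, so `1 - P` is a continuous projection onto `ker P = E₀ᗮ`.
As `g·P h = 0`, multiplication by `g` does not see `P`, so `g·h = g·(1 - P) h`, and it is
injective on `ker P` because `ker P ∩ E₀ = 0`. For `h ∈ ker P` symmetry of `P` gives
`⟪(1 - P)(k_s g(s)*), h⟫ = g(s)⟪k_s, h⟫ = g(s) h(s)`, which is the reproducing property and,
applied to `h = k'_t`, the kernel formula. Finally `1 - P` carries the dense span of the
`k_s a` onto a dense subset of its closed range `ker P`.
-/

open scoped RightActions

/-- The Hilbert C*-module class as Mathlib defined it in December 2024 (right `A`-action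
via `Aᵐᵒᵖ`, inner product `A`-linear on the right); Mathlib's `CStarModule` now uses a left
action and a different linearity convention. -/
class RightCStarModule (A : outParam <| Type*) (E : Type*) [NonUnitalSemiring A] [StarRing A]
    [Module ℂ A] [AddCommGroup E] [Module ℂ E] [PartialOrder A] [SMul Aᵐᵒᵖ E] [Norm A] [Norm E]
    extends Inner A E where
  inner_add_right {x} {y} {z} : inner x (y + z) = inner x y + inner x z
  inner_self_nonneg {x} : 0 ≤ inner x x
  inner_self {x} : inner x x = 0 ↔ x = 0
  inner_op_smul_right {a : A} {x y : E} : inner x (y <• a) = inner x y * a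
  inner_smul_right_complex {z : ℂ} {x} {y} : inner x (z • y) = z • inner x y
  star_inner x y : star (inner x y) = inner y x
  norm_eq_sqrt_norm_inner_self x : ‖x‖ = Real.sqrt ‖inner x x‖

/-- A *reproducing kernel Hilbert C*-module* (RKHC*M) over the C*-algebra `A` on the set `S`:
a Hilbert C*-module `E` over `A` realized (injectively) as a right `A`-submodule of the
`A`-valued functions on `S` via `toFun`, together with kernel elements `k s` such that
evaluation at `s` is given by `f ↦ ⟪k s, f⟫`, and such that the `A`-linear span of the
`k s` is dense in `E`. -/
structure RKHCM (A : Type*) (S : Type*) (E : Type*)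
    [CStarAlgebra A] [PartialOrder A] [StarOrderedRing A]
    [NormedAddCommGroup E] [NormedSpace ℂ E] [SMul Aᵐᵒᵖ E] [RightCStarModule A E] where
  toFun : E → S → A
  injective : Function.Injective toFun
  k : S → E
  eval_eq : ∀ (f : E) (s : S), toFun f s = inner A (k s) f
  dense_span : Dense
    ((Submodule.span ℂ (Set.range fun p : S × A => k p.1 <• p.2) : Submodule ℂ E) : Set E)

theorem Submodule.closure_span_image_eq_closure_range {𝕜 E F : Type*} [Semiring 𝕜]
    [TopologicalSpace E] [AddCommMonoid E] [Module 𝕜 E] [TopologicalSpace F] [AddCommMonoid F]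
    [Module 𝕜 F] (f : E →L[𝕜] F) {s : Set E} (hs : Dense (span 𝕜 s : Set E)) :
    closure (span 𝕜 (f '' s) : Set F) = closure (Set.range f) := by
  have hmap := Submodule.map_span (f : E →ₗ[𝕜] F) s
  rw [ContinuousLinearMap.coe_coe] at hmap
  rw [← hmap, Submodule.map_coe, ContinuousLinearMap.coe_coe,
    ← closure_image_closure f.continuous, hs.closure_eq, Set.image_univ]

namespace RightCStarModule

variable {A E : Type*} [CStarAlgebra A] [PartialOrder A] [NormedAddCommGroup E]
  [NormedSpace ℂ E] [SMul Aᵐᵒᵖ E] [RightCStarModule A E]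

def innerAddMonoidHom (x : E) : E →+ A :=
  AddMonoidHom.mk' (inner A x) fun _ _ => inner_add_right

theorem inner_zero_right {x : E} : inner A x (0 : E) = 0 :=
  map_zero (innerAddMonoidHom x)

theorem inner_sub_right {x y z : E} : inner A x (y - z) = inner A x y - inner A x z :=
  map_sub (innerAddMonoidHom x) y z

theorem inner_add_left {x y z : E} : inner A (x + y) z = inner A x z + inner A y z := by
  rw [← star_inner, inner_add_right, star_add, star_inner, star_inner]

theorem inner_sub_left {x y z : E} : inner A (x - y) z = inner A x z - inner A y z := by
  rw [← star_inner, inner_sub_right, star_sub, star_inner, star_inner]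

theorem inner_smul_left_complex {c : ℂ} {x y : E} : inner A (c • x) y = star c • inner A x y := by
  rw [← star_inner, inner_smul_right_complex, star_smul, star_inner]

theorem inner_op_smul_left {a : A} {x y : E} : inner A (x <• a) y = star a * inner A x y := by
  rw [← star_inner, inner_op_smul_right, star_mul, star_inner]

theorem ext_inner_left {x y : E} (h : ∀ z, inner A x z = inner A y z) : x = y := by
  rw [← sub_eq_zero, ← inner_self (A := A), inner_sub_left, h, sub_self]

theorem norm_le_norm_add_of_inner_eq_zero [StarOrderedRing A] {x y : E} (h : inner A x y = 0) :
    ‖x‖ ≤ ‖x + y‖ := by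
  have hyx : inner A y x = 0 := by rw [← star_inner, h, star_zero]
  have hsq : ‖(inner A x x : A)‖ ≤ ‖(inner A (x + y) (x + y) : A)‖ := by
    rw [inner_add_left, inner_add_right, inner_add_right, h, hyx, add_zero, zero_add]
    exact CStarAlgebra.norm_le_norm_of_nonneg_of_le inner_self_nonneg
      (le_add_of_nonneg_right inner_self_nonneg)
  rw [norm_eq_sqrt_norm_inner_self x, norm_eq_sqrt_norm_inner_self (x + y)]
  exact Real.sqrt_le_sqrt hsq

def IsSymmetric (P : E → E) : Prop :=
  ∀ x y, inner A (P x) y = inner A x (P y)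

namespace IsSymmetric

variable {P : E → E}

theorem map_add (hP : IsSymmetric P) (x y : E) : P (x + y) = P x + P y :=
  ext_inner_left fun z => by rw [hP, inner_add_left, inner_add_left, hP, hP]

theorem map_smul (hP : IsSymmetric P) (c : ℂ) (x : E) : P (c • x) = c • P x :=
  ext_inner_left fun z => by rw [hP, inner_smul_left_complex, inner_smul_left_complex, hP]

@[simps]
def toLinearMap (hP : IsSymmetric P) : E →ₗ[ℂ] E where
  toFun := P
  map_add' := hP.map_add
  map_smul' := hP.map_smul

theorem map_sub (hP : IsSymmetric P) (x y : E) : P (x - y) = P x - P y :=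
  _root_.map_sub hP.toLinearMap x y

theorem map_sub_self_eq_zero (hP : IsSymmetric P) (hPP : ∀ x, P (P x) = P x) (x : E) :
    P (x - P x) = 0 := by
  rw [hP.map_sub, hPP, sub_self]

theorem norm_map_le [StarOrderedRing A] (hP : IsSymmetric P) (hPP : ∀ x, P (P x) = P x)
    (x : E) : ‖P x‖ ≤ ‖x‖ := by
  have h : inner A (P x) (x - P x) = 0 := by
    rw [hP, hP.map_sub_self_eq_zero hPP, inner_zero_right]
  simpa using norm_le_norm_add_of_inner_eq_zero h

@[simps!]
def toContinuousLinearMap [StarOrderedRing A] (hP : IsSymmetric P) (hPP : ∀ x, P (P x) = P x) :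
    E →L[ℂ] E :=
  hP.toLinearMap.mkContinuous 1 fun x => by simpa using hP.norm_map_le hPP x

theorem closure_span_image_sub_self_eq_ker [StarOrderedRing A] (hP : IsSymmetric P)
    (hPP : ∀ x, P (P x) = P x) {s : Set E} (hs : Dense (Submodule.span ℂ s : Set E)) :
    closure (Submodule.span ℂ ((fun x => x - P x) '' s) : Set E) = {h | P h = 0} := by
  let Q := ContinuousLinearMap.id ℂ E - hP.toContinuousLinearMap hPP
  have hrange : Set.range Q = {h | P h = 0} :=
    Set.ext fun h => ⟨by rintro ⟨x, rfl⟩; exact hP.map_sub_self_eq_zero hPP x,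
      fun hh => ⟨h, by simp [Q, hh.out]⟩⟩
  have hclosed : IsClosed {h : E | P h = 0} :=
    isClosed_eq (hP.toContinuousLinearMap hPP).continuous continuous_const
  rw [← hclosed.closure_eq, ← hrange, ← Submodule.closure_span_image_eq_closure_range Q hs]
  rfl

end IsSymmetric

end RightCStarModule

namespace RKHCM

variable {A S E : Type*} [CStarAlgebra A] [PartialOrder A] [StarOrderedRing A]
  [NormedAddCommGroup E] [NormedSpace ℂ E] [SMul Aᵐᵒᵖ E] [RightCStarModule A E]
  (R : RKHCM A S E)

theorem toFun_sub (x y : E) (s : S) : R.toFun (x - y) s = R.toFun x s - R.toFun y s := by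
  simp only [R.eval_eq, RightCStarModule.inner_sub_right]

theorem toFun_op_smul (x : E) (a : A) (s : S) : R.toFun (x <• a) s = R.toFun x s * a := by
  simp only [R.eval_eq, RightCStarModule.inner_op_smul_right]

end RKHCM

variable {A : Type*} [CStarAlgebra A] [PartialOrder A] [StarOrderedRing A]
variable {S : Type*} [Nonempty S]
variable {E : Type*} [NormedAddCommGroup E] [NormedSpace ℂ E] [SMul Aᵐᵒᵖ E]
  [RightCStarModule A E] [CompleteSpace E]

/-- `E_g` is modelled by `E₀ᗮ = ker P` through `h ↦ g·h`, and its kernel element at `s` by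
`k'_s = (1 - P)(k_s <• g(s)*)`. -/
theorem multiplier_range_is_rkhcm
    (R : RKHCM A S E) (g : S → A) (E₀ : Set E)
    (hE₀ : E₀ = {h : E | ∀ s, g s * R.toFun h s = 0})
    (P : E → E)
    (hPmem : ∀ f, P f ∈ E₀) (hPfix : ∀ f ∈ E₀, P f = f)
    (hPadj : ∀ f f' : E, (inner A (P f) f' : A) = inner A f (P f')) :
    (∀ h₁ h₂ : E, P h₁ = 0 → P h₂ = 0 →
      (∀ s, g s * R.toFun h₁ s = g s * R.toFun h₂ s) → h₁ = h₂) ∧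
    (∀ (h : E) (s : S), g s * R.toFun h s = g s * R.toFun (h - P h) s) ∧
    (∀ h : E, P h = 0 → ∀ s : S,
      g s * R.toFun h s =
        inner A ((R.k s <• star (g s)) - P (R.k s <• star (g s))) h) ∧
    (∀ s t : S,
      g t * R.toFun ((R.k s <• star (g s)) - P (R.k s <• star (g s))) t =
        g t * R.toFun (R.k s) t * star (g s)) ∧
    closure ((Submodule.span ℂ
        (Set.range fun p : S × A => (R.k p.1 <• p.2) - P (R.k p.1 <• p.2)) :
        Submodule ℂ E) : Set E) = {h : E | P h = 0} ∧
    (∀ s t : S,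
      (inner A ((R.k s <• star (g s)) - P (R.k s <• star (g s)))
          ((R.k t <• star (g t)) - P (R.k t <• star (g t))) : A) =
        g s * inner A (R.k s) (R.k t) * star (g t)) := by
  subst hE₀
  have hP : RightCStarModule.IsSymmetric P := hPadj
  have hPP (x : E) : P (P x) = P x := hPfix _ (hPmem x)
  have hgP (x : E) (s : S) : g s * R.toFun (P x) s = 0 := hPmem x s
  have hmul_sub (x : E) (s : S) : g s * R.toFun (x - P x) s = g s * R.toFun x s := by
    rw [R.toFun_sub, mul_sub, hgP, sub_zero]
  have reproduce (h : E) (hh : P h = 0) (s : S) :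
      g s * R.toFun h s = inner A ((R.k s <• star (g s)) - P (R.k s <• star (g s))) h := by
    rw [RightCStarModule.inner_sub_left, hP, hh, RightCStarModule.inner_zero_right, sub_zero,
      RightCStarModule.inner_op_smul_left, star_star, R.eval_eq]
  have kernel_mul (s t : S) :
      g t * R.toFun ((R.k s <• star (g s)) - P (R.k s <• star (g s))) t =
        g t * R.toFun (R.k s) t * star (g s) := by
    rw [hmul_sub, R.toFun_op_smul, mul_assoc]
  refine ⟨fun h₁ h₂ hP₁ hP₂ hg => ?_, fun h s => (hmul_sub h s).symm, reproduce, kernel_mul,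
    ?_, fun s t => ?_⟩
  · have hfix := hPfix (h₁ - h₂) fun s => by rw [R.toFun_sub, mul_sub, hg, sub_self]
    rwa [hP.map_sub, hP₁, hP₂, sub_zero, eq_comm, sub_eq_zero] at hfix
  · rw [← hP.closure_span_image_sub_self_eq_ker hPP R.dense_span, ← Set.range_comp]
    rfl
  · rw [← reproduce _ (hP.map_sub_self_eq_zero hPP _), kernel_mul, R.eval_eq]
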